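/- Let (X, T, P, ≤, σ) be a strictly typed topological space and let c = (p_0 ≤ p_1 ≤ ... ≤ p_{k-1}) be a chain of types in the lattice L. For each x ∈ X, let T_c(x) = {U ∈ T : x ∈ U and p_i ≤ σ(U) ≤ p_{i+1} for some i < k-1} and J_c(x) = {U ∈ T_c(x) : U is p_i-join-irreducible for some i < k-1}. Then J_c(x) is a neighborhood base for T_c(x): for every U ∈ T_c(x) there exists V ∈ J_c(x) with x ∈ V ⊆ U. -/

import Mathlib

/-
Shrink `U` to a minimal open neighbourhood `V` of `x` whose type is still at least `c i`
(it exists because `X` is finite). If `V = W ∪ W'` with both parts of type at least `c i`,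
then `x` lies in one of them, and minimality forces `V` to equal that part; so `V` is
`c i`-join-irreducible. Its type stays below `c (i + 1)` by monotonicity of `σ`.
-/

open Set

/-- `p`-join-irreducible open set in a typed topological space with type map `σ`. -/
def PJI {X : Type*} [TopologicalSpace X] {L : Type*} [Lattice L]
    (σ : Set X → L) (p : L) (U : Set X) : Prop :=
  U.Nonempty ∧ IsOpen U ∧ p ≤ σ U ∧
    ∀ W V : Set X, IsOpen W → IsOpen V → p ≤ σ W → p ≤ σ V → U = W ∪ V → U = W ∨ U = V

/-- The `c`-neighborhood system of `x`, for the chain `c 0 ≤ c 1 ≤ ... ≤ c (k-1)`. -/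
def Tc {X : Type*} [TopologicalSpace X] {L : Type*} [Lattice L]
    (σ : Set X → L) (c : ℕ → L) (k : ℕ) (x : X) : Set (Set X) :=
  {U | IsOpen U ∧ x ∈ U ∧ ∃ i, i + 1 < k ∧ c i ≤ σ U ∧ σ U ≤ c (i + 1)}

/-- The join-irreducible members of the `c`-neighborhood system of `x`. -/
def Jc {X : Type*} [TopologicalSpace X] {L : Type*} [Lattice L]
    (σ : Set X → L) (c : ℕ → L) (k : ℕ) (x : X) : Set (Set X) :=
  {U | U ∈ Tc σ c k x ∧ ∃ i, i + 1 < k ∧ c i ≤ σ U ∧ σ U ≤ c (i + 1) ∧ PJI σ (c i) U}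

/-- The `c`-closure of a set `A`. -/
def cCl {X : Type*} [TopologicalSpace X] {L : Type*} [Lattice L]
    (σ : Set X → L) (c : ℕ → L) (k : ℕ) (A : Set X) : Set X :=
  {x | ∀ U ∈ Jc σ c k x, (U ∩ A).Nonempty}

/-- The set of points with empty join-irreducible `c`-neighborhood family. -/
def Ec {X : Type*} [TopologicalSpace X] {L : Type*} [Lattice L]
    (σ : Set X → L) (c : ℕ → L) (k : ℕ) : Set X :=
  {x | Jc σ c k x = ∅}

/-- `D` is `c`-dense in `Y`. -/
def cDense {X : Type*} [TopologicalSpace X] {L : Type*} [Lattice L]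
    (σ : Set X → L) (c : ℕ → L) (k : ℕ) (D Y : Set X) : Prop :=
  ∀ x ∈ Y, (x ∈ Ec σ c k → x ∈ D) ∧ ∀ U ∈ Jc σ c k x, (U ∩ D).Nonempty

/-- `T_c(X)`: union of the `c`-neighborhood systems over all points. -/
def TcX {X : Type*} [TopologicalSpace X] {L : Type*} [Lattice L]
    (σ : Set X → L) (c : ℕ → L) (k : ℕ) : Set (Set X) :=
  {U | ∃ x : X, U ∈ Tc σ c k x}

section JoinIrreducible

variable {X : Type*} [TopologicalSpace X] {L : Type*} [Lattice L] {σ : Set X → L} {p : L}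
  {x : X}

theorem PJI.of_minimal {V : Set X} (hV : Minimal (fun W => IsOpen W ∧ x ∈ W ∧ p ≤ σ W) V) :
    PJI σ p V := by
  obtain ⟨hVo, hxV, hpV⟩ := hV.prop
  refine ⟨⟨x, hxV⟩, hVo, hpV, fun W W' hWo hW'o hpW hpW' hVeq => ?_⟩
  rcases (hVeq ▸ hxV : x ∈ W ∪ W') with hxW | hxW'
  · exact .inl (hV.eq_of_le ⟨hWo, hxW, hpW⟩ (hVeq ▸ subset_union_left)).symm
  · exact .inr (hV.eq_of_le ⟨hW'o, hxW', hpW'⟩ (hVeq ▸ subset_union_right)).symm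

theorem exists_PJI_mem_subset [Finite X] {U : Set X} (hUo : IsOpen U) (hxU : x ∈ U)
    (hpU : p ≤ σ U) : ∃ V, PJI σ p V ∧ x ∈ V ∧ V ⊆ U := by
  obtain ⟨V, hVU, hV⟩ := exists_minimal_le_of_wellFoundedLT
    (fun W => IsOpen W ∧ x ∈ W ∧ p ≤ σ W) U ⟨hUo, hxU, hpU⟩
  exact ⟨V, PJI.of_minimal hV, hV.prop.2.1, hVU⟩

end JoinIrreducible

theorem stmt6_general {X : Type*} [TopologicalSpace X] [Finite X]
    {L : Type*} [Lattice L] (σ : Set X → L)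
    (hmono : ∀ U V : Set X, IsOpen U → IsOpen V → U ⊆ V → σ U ≤ σ V)
    (c : ℕ → L) (k : ℕ)
    (x : X) (U : Set X) (hU : U ∈ Tc σ c k x) :
    ∃ V ∈ Jc σ c k x, x ∈ V ∧ V ⊆ U := by
  obtain ⟨hUo, hxU, i, hik, hciU, hUci⟩ := hU
  obtain ⟨V, hV, hxV, hVU⟩ := exists_PJI_mem_subset hUo hxU hciU
  have hVci : σ V ≤ c (i + 1) := (hmono V U hV.2.1 hUo hVU).trans hUci
  exact ⟨V, ⟨⟨hV.2.1, hxV, i, hik, hV.2.2.1, hVci⟩, i, hik, hV.2.2.1, hVci, hV⟩, hxV, hVU⟩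

theorem stmt6 {X : Type*} [TopologicalSpace X] [Finite X]
    {L : Type*} [Lattice L] [BoundedOrder L] (σ : Set X → L)
    (hbot : ∀ U : Set X, IsOpen U → (σ U = ⊥ ↔ U = ∅))
    (htop : ∀ U : Set X, IsOpen U → σ U ≠ ⊤)
    (hmono : ∀ U V : Set X, IsOpen U → IsOpen V → U ⊆ V → σ U ≤ σ V)
    (hstrict : ∀ U V : Set X, IsOpen U → IsOpen V → U.Nonempty → U ⊂ V → σ U < σ V)
    (c : ℕ → L) (k : ℕ) (hc : ∀ i j, i ≤ j → j < k → c i ≤ c j)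
    (x : X) (U : Set X) (hU : U ∈ Tc σ c k x) :
    ∃ V ∈ Jc σ c k x, x ∈ V ∧ V ⊆ U :=
  stmt6_general σ hmono c k x U hU
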